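/- arXiv:2109.13377 — 5 statements merged into one kernel-verified Lean document; each statement's English description precedes it below -/
import Mathlib

section
/- Under the iterate hypotheses, for every occupancy measure q ∈ Δ and every λ ∈ ℝ² with λ ≥ 0 componentwise and λ[1] + λ[2] = B, one has L(q̃, λ) − L(q, λ̃) ≤ ε_ol, where ε_ol = 2ε_br + 2ε_est + R/T and ε_est = (C̄ + B·D̄)·ε_oe. In particular the primal-dual gap max_{λ ≥ 0, λ[1]+λ[2]=B} L(q̃, λ) − min_{q ∈ Δ} L(q, λ̃) is at most ε_ol. -/
/-- ℓ¹ norm Σ_{h,s,a} |·| on functions {0,…,H} × S × A → ℝ. -/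
def l1norm {S A : Type*} [Fintype S] [Fintype A] (H : ℕ) (q : ℕ → S → A → ℝ) : ℝ :=
  ∑ h ∈ Finset.range (H + 1), ∑ s : S, ∑ a : A, |q h s a|

/-- Weighted total cost Σ_{h,s,a} q_h(s,a) c_h(s,a). -/
def costVal {S A : Type*} [Fintype S] [Fintype A] (H : ℕ) (c q : ℕ → S → A → ℝ) : ℝ :=
  ∑ h ∈ Finset.range (H + 1), ∑ s : S, ∑ a : A, q h s a * c h s a

/-- Lagrangian L(q, λ) = C(q) + λ[1]·(D(q) − l). -/
def lagrangian {S A : Type*} [Fintype S] [Fintype A] (H : ℕ) (c d : ℕ → S → A → ℝ)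
    (l : ℝ) (q : ℕ → S → A → ℝ) (lam : ℝ × ℝ) : ℝ :=
  costVal H c q + lam.1 * (costVal H d q - l)

/-- q ∈ Δ: the linear constraints defining occupancy measures of the finite-horizon MDP
with horizon H, initial state s0 and transition kernel p (where `p h s a s'` is the
probability of moving to `s'` from `s` under `a` at step `h`). -/
def IsOccupancy {S A : Type*} [Fintype S] [Fintype A] [DecidableEq S] (H : ℕ) (s0 : S)
    (p : ℕ → S → A → S → ℝ) (q : ℕ → S → A → ℝ) : Prop :=
  (∀ h ≤ H, ∀ (s : S) (a : A), 0 ≤ q h s a) ∧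
  (∀ s : S, ∑ a : A, q 0 s a = if s = s0 then 1 else 0) ∧
  (∀ h < H, ∀ s : S, ∑ a : A, q (h + 1) s a = ∑ s' : S, ∑ a' : A, p h s' a' s * q h s' a')

section Aux
variable {S A : Type*} [Fintype S] [Fintype A]

lemma costVal_add (H : ℕ) (c x y : ℕ → S → A → ℝ) :
    costVal H c (fun h s a => x h s a + y h s a) = costVal H c x + costVal H c y := by
  simp [costVal, add_mul, Finset.sum_add_distrib]

lemma costVal_sum (H T : ℕ) (c : ℕ → S → A → ℝ) (f : ℕ → ℕ → S → A → ℝ) :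
    costVal H c (fun h s a => ∑ t ∈ Finset.range T, f t h s a)
      = ∑ t ∈ Finset.range T, costVal H c (f t) := by
  induction T with
  | zero => simp [costVal]
  | succ n ih =>
    simp only [Finset.sum_range_succ, ← ih, costVal_add]

lemma costVal_div (H : ℕ) (c x : ℕ → S → A → ℝ) (r : ℝ) :
    costVal H c (fun h s a => x h s a / r) = costVal H c x / r := by
  simp [costVal, Finset.sum_div, div_mul_eq_mul_div]

lemma costVal_sub (H : ℕ) (e x y : ℕ → S → A → ℝ) :
    costVal H e (fun h s a => x h s a - y h s a) = costVal H e x - costVal H e y := by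
  simp [costVal, sub_mul, Finset.sum_sub_distrib]

lemma costVal_add_smul (H : ℕ) (c d z : ℕ → S → A → ℝ) (r : ℝ) :
    costVal H (fun h s a => c h s a + r * d h s a) z
      = costVal H c z + r * costVal H d z := by
  simp [costVal, mul_add, Finset.sum_add_distrib, Finset.mul_sum, mul_left_comm]

lemma lag_sub (H : ℕ) (c d : ℕ → S → A → ℝ) (l : ℝ) (x y : ℕ → S → A → ℝ) (lm : ℝ × ℝ) :
    lagrangian H c d l x lm - lagrangian H c d l y lm
      = costVal H (fun h s a => c h s a + lm.1 * d h s a) (fun h s a => x h s a - y h s a) := by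
  rw [costVal_sub, costVal_add_smul, costVal_add_smul]
  unfold lagrangian; ring

lemma costVal_le_l1 (H : ℕ) (e x : ℕ → S → A → ℝ) (E : ℝ)
    (he : ∀ h ≤ H, ∀ (s : S) (a : A), 0 ≤ e h s a ∧ e h s a ≤ E) :
    costVal H e x ≤ E * l1norm H x := by
  unfold costVal l1norm
  rw [Finset.mul_sum]
  refine Finset.sum_le_sum fun h hh => ?_
  rw [Finset.mul_sum]
  refine Finset.sum_le_sum fun s _ => ?_
  rw [Finset.mul_sum]
  refine Finset.sum_le_sum fun a _ => ?_
  obtain ⟨h1, h2⟩ := he h (Finset.mem_range_succ_iff.mp hh) s a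
  calc x h s a * e h s a ≤ |x h s a| * e h s a :=
        mul_le_mul_of_nonneg_right (le_abs_self _) h1
    _ ≤ |x h s a| * E := mul_le_mul_of_nonneg_left h2 (abs_nonneg _)
    _ = E * |x h s a| := mul_comm _ _

lemma l1norm_sub_comm (H : ℕ) (x y : ℕ → S → A → ℝ) :
    l1norm H (fun h s a => x h s a - y h s a) = l1norm H (fun h s a => y h s a - x h s a) := by
  simp [l1norm, abs_sub_comm]

end Aux

theorem stmt1 {S A : Type*} [Fintype S] [Fintype A] [DecidableEq S] [Nonempty S] [Nonempty A]
    (H : ℕ) (s0 : S) (p : ℕ → S → A → S → ℝ)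
    (hp : ∀ h < H, ∀ (s : S) (a : A), (∀ s' : S, 0 ≤ p h s a s') ∧ ∑ s' : S, p h s a s' = 1)
    (c d : ℕ → S → A → ℝ) (Cbar Dbar : ℝ)
    (hc : ∀ h ≤ H, ∀ (s : S) (a : A), 0 ≤ c h s a ∧ c h s a ≤ Cbar)
    (hd : ∀ h ≤ H, ∀ (s : S) (a : A), 0 ≤ d h s a ∧ d h s a ≤ Dbar)
    (l B : ℝ) (hB : 0 < B) (T : ℕ) (hT : 1 ≤ T)
    (εbr εoe R : ℝ) (hεbr : 0 ≤ εbr) (hεoe : 0 ≤ εoe) (hR : 0 ≤ R)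
    (qt qhat : ℕ → ℕ → S → A → ℝ) (lam : ℕ → ℝ × ℝ)
    (hqt : ∀ t < T, IsOccupancy H s0 p (qt t))
    (hqhat : ∀ t < T, l1norm H (fun h s a => qt t h s a - qhat t h s a) ≤ εoe)
    (hlam : ∀ t < T, 0 ≤ (lam t).1 ∧ 0 ≤ (lam t).2 ∧ (lam t).1 + (lam t).2 = B)
    (hbr : ∀ t < T, ∀ q : ℕ → S → A → ℝ, IsOccupancy H s0 p q →
      lagrangian H c d l (qt t) (lam t) ≤ lagrangian H c d l q (lam t) + εbr)
    (hnr : ∀ μ : ℝ × ℝ, 0 ≤ μ.1 → 0 ≤ μ.2 → μ.1 + μ.2 = B →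
      (∑ t ∈ Finset.range T, lagrangian H c d l (qhat t) μ) -
        (∑ t ∈ Finset.range T, lagrangian H c d l (qhat t) (lam t)) ≤ R)
    (qtil : ℕ → S → A → ℝ)
    (hqtil : qtil = fun h s a => (∑ t ∈ Finset.range T, qhat t h s a) / T)
    (lamtil : ℝ × ℝ)
    (hlamtil : lamtil = ((∑ t ∈ Finset.range T, (lam t).1) / T,
                         (∑ t ∈ Finset.range T, (lam t).2) / T))
    (εest εol : ℝ) (hεest : εest = (Cbar + B * Dbar) * εoe)
    (hεol : εol = 2 * εbr + 2 * εest + R / T) :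
    ∀ q : ℕ → S → A → ℝ, IsOccupancy H s0 p q →
      ∀ μ : ℝ × ℝ, 0 ≤ μ.1 → 0 ≤ μ.2 → μ.1 + μ.2 = B →
        lagrangian H c d l qtil μ - lagrangian H c d l q lamtil ≤ εol := by
  intro q hq μ hμ1 hμ2 hμB
  have hT0 : (0:ℝ) < (T:ℝ) := by exact_mod_cast hT
  set E : ℝ := Cbar + B * Dbar with hE
  obtain ⟨s₁⟩ := ‹Nonempty S›
  obtain ⟨a₁⟩ := ‹Nonempty A›
  have hC0 : 0 ≤ Cbar :=
    le_trans (hc 0 (Nat.zero_le H) s₁ a₁).1 (hc 0 (Nat.zero_le H) s₁ a₁).2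
  have hD0 : 0 ≤ Dbar :=
    le_trans (hd 0 (Nat.zero_le H) s₁ a₁).1 (hd 0 (Nat.zero_le H) s₁ a₁).2
  have hE0 : 0 ≤ E := add_nonneg hC0 (mul_nonneg hB.le hD0)
  have hεest0 : 0 ≤ εest := hεest ▸ mul_nonneg hE0 hεoe
  -- estimation step
  have hest : ∀ t < T,
      lagrangian H c d l (qhat t) (lam t) ≤ lagrangian H c d l (qt t) (lam t) + εest := by
    intro t ht
    obtain ⟨hl0, hl0', hlB⟩ := hlam t ht
    have hl1 : (lam t).1 ≤ B := by linarith
    have he : ∀ h ≤ H, ∀ (s : S) (a : A),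
        0 ≤ c h s a + (lam t).1 * d h s a ∧ c h s a + (lam t).1 * d h s a ≤ E := by
      intro h hh s a
      obtain ⟨hc1, hc2⟩ := hc h hh s a
      obtain ⟨hd1, hd2⟩ := hd h hh s a
      refine ⟨add_nonneg hc1 (mul_nonneg hl0 hd1), ?_⟩
      have : (lam t).1 * d h s a ≤ B * Dbar := mul_le_mul hl1 hd2 hd1 hB.le
      rw [hE]; linarith
    have hmain := costVal_le_l1 H _ (fun h s a => qhat t h s a - qt t h s a) E he
    rw [← lag_sub] at hmain
    have h2 : l1norm H (fun h s a => qhat t h s a - qt t h s a) ≤ εoe := by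
      rw [l1norm_sub_comm]; exact hqhat t ht
    have h3 : E * l1norm H (fun h s a => qhat t h s a - qt t h s a) ≤ E * εoe :=
      mul_le_mul_of_nonneg_left h2 hE0
    rw [hεest]; linarith
  -- linearity in q
  have hlin1 : (T:ℝ) * lagrangian H c d l qtil μ
      = ∑ t ∈ Finset.range T, lagrangian H c d l (qhat t) μ := by
    subst hqtil
    simp only [lagrangian, costVal_div, costVal_sum, Finset.sum_add_distrib,
      Finset.mul_sum, Finset.sum_sub_distrib, Finset.sum_const, Finset.card_range,
      nsmul_eq_mul]
    field_simp
    simp only [Finset.sum_add_distrib, Finset.sum_const, Finset.card_range, nsmul_eq_mul,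
      ← Finset.mul_sum]
    rw [Finset.sum_sub_distrib, Finset.sum_const, Finset.card_range, nsmul_eq_mul]
  -- linearity in λ
  have hlin2 : (T:ℝ) * lagrangian H c d l q lamtil
      = ∑ t ∈ Finset.range T, lagrangian H c d l q (lam t) := by
    subst hlamtil
    simp only [lagrangian, Finset.sum_add_distrib, Finset.sum_const, Finset.card_range,
      nsmul_eq_mul, ← Finset.sum_mul]
    field_simp
  -- main chain
  have h2 : ∑ t ∈ Finset.range T, lagrangian H c d l (qhat t) (lam t)
      ≤ ∑ t ∈ Finset.range T, (lagrangian H c d l q (lam t) + εbr + εest) := by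
    refine Finset.sum_le_sum fun t ht => ?_
    have h4 := hest t (Finset.mem_range.mp ht)
    have h5 := hbr t (Finset.mem_range.mp ht) q hq
    linarith
  have h6 : ∑ t ∈ Finset.range T, (lagrangian H c d l q (lam t) + εbr + εest)
      = (∑ t ∈ Finset.range T, lagrangian H c d l q (lam t)) + T * εbr + T * εest := by
    simp [Finset.sum_add_distrib, Finset.card_range]
  have h1 := hnr μ hμ1 hμ2 hμB
  have key : (T:ℝ) * lagrangian H c d l qtil μ
      ≤ (T:ℝ) * lagrangian H c d l q lamtil + T * εbr + T * εest + R := by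
    rw [hlin1, hlin2]; linarith
  have hdiv : lagrangian H c d l qtil μ - lagrangian H c d l q lamtil
      ≤ εbr + εest + R / T := by
    have h7 : (T:ℝ) * (lagrangian H c d l qtil μ - lagrangian H c d l q lamtil)
        ≤ (T:ℝ) * (εbr + εest + R / T) := by
      have h8 : (T:ℝ) * (R / T) = R := by field_simp
      rw [mul_sub, mul_add, mul_add, h8]; linarith
    exact le_of_mul_le_mul_left h7 hT0
  have hRT0 : 0 ≤ R / T := div_nonneg hR hT0.le
  rw [hεol]; linarith
end

section
/- Under the iterate hypotheses, if there exists a feasible occupancy measure q^f ∈ Δ with D(q^f) ≤ l, then the averaged estimate q̃ approximately satisfies the constraint: D(q̃) ≤ l + 2(C̄·(H+1) + ε_ol + ε_est)/B, where ε_est = (C̄ + B·D̄)·ε_oe and ε_ol = 2ε_br + 2ε_est + R/T. -/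
open Finset

theorem sum_div_le_add_div {T : ℕ} (hT : 1 ≤ T) {x y : ℕ → ℝ} {K R : ℝ}
    (hxy : ∀ t ∈ range T, x t ≤ y t + K) (hy : ∑ t ∈ range T, y t ≤ R) :
    (∑ t ∈ range T, x t) / T ≤ K + R / T := by
  have hT' : (0 : ℝ) < T := by exact_mod_cast hT
  rw [div_le_iff₀ hT', add_mul, div_mul_cancel₀ R hT'.ne']
  calc ∑ t ∈ range T, x t ≤ ∑ t ∈ range T, (y t + K) := sum_le_sum hxy
    _ ≤ K * T + R := by
      rw [sum_add_distrib, sum_const, card_range, nsmul_eq_mul]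
      linarith

section

variable {S A : Type*} [Fintype S] [Fintype A] {H : ℕ}

theorem IsOccupancy.sum_eq_one [DecidableEq S] {s0 : S} {p : ℕ → S → A → S → ℝ}
    {q : ℕ → S → A → ℝ}
    (hp : ∀ h < H, ∀ (s : S) (a : A), ∑ s' : S, p h s a s' = 1)
    (hq : IsOccupancy H s0 p q) : ∀ h ≤ H, ∑ s : S, ∑ a : A, q h s a = 1 := by
  intro h
  induction h with
  | zero => simp [hq.2.1]
  | succ n ih =>
    intro hn
    calc ∑ s : S, ∑ a : A, q (n + 1) s a
        = ∑ s : S, ∑ s' : S, ∑ a' : A, p n s' a' s * q n s' a' :=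
          sum_congr rfl fun s _ => hq.2.2 n hn s
      _ = ∑ s' : S, ∑ a' : A, (∑ s : S, p n s' a' s) * q n s' a' := by
          simp only [sum_mul]
          rw [sum_comm]
          exact sum_congr rfl fun _ _ => sum_comm
      _ = 1 := by simp only [hp n hn, one_mul]; exact ih (n.le_succ.trans hn)

theorem costVal_nonneg {c q : ℕ → S → A → ℝ} (hq : ∀ h ≤ H, ∀ (s : S) (a : A), 0 ≤ q h s a)
    (hc : ∀ h ≤ H, ∀ (s : S) (a : A), 0 ≤ c h s a) : 0 ≤ costVal H c q :=
  sum_nonneg fun h hh => sum_nonneg fun s _ => sum_nonneg fun a _ =>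
    have hh : h ≤ H := mem_range_succ_iff.mp hh
    mul_nonneg (hq h hh s a) (hc h hh s a)

theorem IsOccupancy.costVal_le [DecidableEq S] {s0 : S} {p : ℕ → S → A → S → ℝ}
    {c q : ℕ → S → A → ℝ} {Cbar : ℝ}
    (hp : ∀ h < H, ∀ (s : S) (a : A), ∑ s' : S, p h s a s' = 1)
    (hq : IsOccupancy H s0 p q) (hc : ∀ h ≤ H, ∀ (s : S) (a : A), c h s a ≤ Cbar) :
    costVal H c q ≤ Cbar * (H + 1) :=
  calc costVal H c q ≤ ∑ h ∈ range (H + 1), (∑ s : S, ∑ a : A, q h s a) * Cbar := by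
        simp only [costVal, sum_mul]
        gcongr with h hh s _ a _
        · exact hq.1 h (mem_range_succ_iff.mp hh) s a
        · exact hc h (mem_range_succ_iff.mp hh) s a
    _ = Cbar * (H + 1) := by
        rw [sum_congr rfl fun h hh => by rw [hq.sum_eq_one hp h (mem_range_succ_iff.mp hh)]]
        simp [mul_comm]

theorem abs_costVal_sub_le {c q₁ q₂ : ℕ → S → A → ℝ} {Cbar : ℝ}
    (hc : ∀ h ≤ H, ∀ (s : S) (a : A), |c h s a| ≤ Cbar) :
    |costVal H c q₁ - costVal H c q₂| ≤ Cbar * l1norm H (fun h s a => q₁ h s a - q₂ h s a) := by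
  have hsub : costVal H c q₁ - costVal H c q₂ =
      ∑ h ∈ range (H + 1), ∑ s : S, ∑ a : A, (q₁ h s a - q₂ h s a) * c h s a := by
    simp only [costVal, ← sum_sub_distrib, sub_mul]
  rw [hsub, l1norm, mul_sum]
  refine (abs_sum_le_sum_abs _ _).trans (sum_le_sum fun h hh => ?_)
  rw [mul_sum]
  refine (abs_sum_le_sum_abs _ _).trans (sum_le_sum fun s _ => ?_)
  rw [mul_sum]
  refine (abs_sum_le_sum_abs _ _).trans (sum_le_sum fun a _ => ?_)
  rw [abs_mul, mul_comm Cbar]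
  exact mul_le_mul_of_nonneg_left (hc h (mem_range_succ_iff.mp hh) s a) (abs_nonneg _)

theorem costVal_avg {c : ℕ → S → A → ℝ} (T : ℕ) (q : ℕ → ℕ → S → A → ℝ) :
    costVal H c (fun h s a => (∑ t ∈ range T, q t h s a) / T) =
      (∑ t ∈ range T, costVal H c (q t)) / T := by
  simp only [costVal, div_mul_eq_mul_div, ← sum_div, sum_mul]
  congr 1
  symm
  rw [sum_comm]
  refine sum_congr rfl fun h _ => ?_
  rw [sum_comm]
  exact sum_congr rfl fun s _ => sum_comm

theorem abs_lagrangian_sub_le {c d q₁ q₂ : ℕ → S → A → ℝ} {l Cbar Dbar B : ℝ} {μ : ℝ × ℝ}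
    (hc : ∀ h ≤ H, ∀ (s : S) (a : A), |c h s a| ≤ Cbar)
    (hd : ∀ h ≤ H, ∀ (s : S) (a : A), |d h s a| ≤ Dbar) (hμ : 0 ≤ μ.1) (hμB : μ.1 ≤ B) :
    |lagrangian H c d l q₁ μ - lagrangian H c d l q₂ μ| ≤
      (Cbar + B * Dbar) * l1norm H (fun h s a => q₁ h s a - q₂ h s a) := by
  have hC := abs_costVal_sub_le (q₁ := q₁) (q₂ := q₂) hc
  have hD := abs_costVal_sub_le (q₁ := q₁) (q₂ := q₂) hd
  calc |lagrangian H c d l q₁ μ - lagrangian H c d l q₂ μ|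
      = |(costVal H c q₁ - costVal H c q₂) + μ.1 * (costVal H d q₁ - costVal H d q₂)| := by
        unfold lagrangian; ring_nf
    _ ≤ |costVal H c q₁ - costVal H c q₂| + μ.1 * |costVal H d q₁ - costVal H d q₂| := by
        exact (abs_add_le _ _).trans_eq (by rw [abs_mul, abs_of_nonneg hμ])
    _ ≤ (Cbar + B * Dbar) * l1norm H (fun h s a => q₁ h s a - q₂ h s a) := by
        linarith [mul_le_mul hμB hD (abs_nonneg _) (hμ.trans hμB)]

theorem IsOccupancy.lagrangian_sub_costVal_le [DecidableEq S] {s0 : S} {p : ℕ → S → A → S → ℝ}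
    {c d q q' qf : ℕ → S → A → ℝ} {l Cbar Dbar B εbr ε : ℝ} {μ : ℝ × ℝ}
    (hp : ∀ h < H, ∀ (s : S) (a : A), ∑ s' : S, p h s a s' = 1)
    (hc : ∀ h ≤ H, ∀ (s : S) (a : A), 0 ≤ c h s a ∧ c h s a ≤ Cbar)
    (hd : ∀ h ≤ H, ∀ (s : S) (a : A), 0 ≤ d h s a ∧ d h s a ≤ Dbar)
    (hCbar : 0 ≤ Cbar) (hDbar : 0 ≤ Dbar) (hμ : 0 ≤ μ.1) (hμB : μ.1 ≤ B)
    (hq : IsOccupancy H s0 p q) (hq' : l1norm H (fun h s a => q h s a - q' h s a) ≤ ε)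
    (hqf : IsOccupancy H s0 p qf) (hqffeas : costVal H d qf ≤ l)
    (hbr : lagrangian H c d l q μ ≤ lagrangian H c d l qf μ + εbr) :
    lagrangian H c d l q' μ - costVal H c q' ≤
      Cbar * (H + 1) + εbr + 2 * ((Cbar + B * Dbar) * ε) := by
  have hcabs h hh s a : |c h s a| ≤ Cbar := abs_le.mpr ⟨by linarith [hc h hh s a], (hc h hh s a).2⟩
  have hdabs h hh s a : |d h s a| ≤ Dbar := abs_le.mpr ⟨by linarith [hd h hh s a], (hd h hh s a).2⟩
  have hN : 0 ≤ l1norm H (fun h s a => q h s a - q' h s a) := by unfold l1norm; positivity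
  have hL := abs_le.mp (abs_lagrangian_sub_le (l := l) (q₁ := q) (q₂ := q') hcabs hdabs hμ hμB)
  have hC := abs_le.mp (abs_costVal_sub_le (q₁ := q) (q₂ := q') hcabs)
  have hCq : 0 ≤ costVal H c q := costVal_nonneg hq.1 fun h hh s a => (hc h hh s a).1
  have hLqf : lagrangian H c d l qf μ ≤ Cbar * (H + 1) := by
    have := hqf.costVal_le hp fun h hh s a => (hc h hh s a).2
    unfold lagrangian
    linarith [mul_nonpos_of_nonneg_of_nonpos hμ (sub_nonpos.mpr hqffeas)]
  have hBDbar : 0 ≤ B * Dbar := mul_nonneg (hμ.trans hμB) hDbar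
  have hLε : (Cbar + B * Dbar) * l1norm H (fun h s a => q h s a - q' h s a) ≤
      (Cbar + B * Dbar) * ε := mul_le_mul_of_nonneg_left hq' (by positivity)
  have hCε : Cbar * l1norm H (fun h s a => q h s a - q' h s a) ≤ (Cbar + B * Dbar) * ε :=
    (mul_le_mul_of_nonneg_right (le_add_of_nonneg_right hBDbar) hN).trans hLε
  linarith

end

theorem stmt2_general {S A : Type*} [Fintype S] [Fintype A] [DecidableEq S] [Nonempty A]
    (H : ℕ) (s0 : S) (p : ℕ → S → A → S → ℝ)
    (hp : ∀ h < H, ∀ (s : S) (a : A), (∀ s' : S, 0 ≤ p h s a s') ∧ ∑ s' : S, p h s a s' = 1)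
    (c d : ℕ → S → A → ℝ) (Cbar Dbar : ℝ)
    (hc : ∀ h ≤ H, ∀ (s : S) (a : A), 0 ≤ c h s a ∧ c h s a ≤ Cbar)
    (hd : ∀ h ≤ H, ∀ (s : S) (a : A), 0 ≤ d h s a ∧ d h s a ≤ Dbar)
    (l B : ℝ) (hB : 0 < B) (T : ℕ) (hT : 1 ≤ T)
    (εbr εoe R : ℝ) (hεbr : 0 ≤ εbr) (hεoe : 0 ≤ εoe) (hR : 0 ≤ R)
    (qt qhat : ℕ → ℕ → S → A → ℝ) (lam : ℕ → ℝ × ℝ)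
    (hqt : ∀ t < T, IsOccupancy H s0 p (qt t))
    (hqhat : ∀ t < T, l1norm H (fun h s a => qt t h s a - qhat t h s a) ≤ εoe)
    (hlam : ∀ t < T, 0 ≤ (lam t).1 ∧ 0 ≤ (lam t).2 ∧ (lam t).1 + (lam t).2 = B)
    (hbr : ∀ t < T, ∀ q : ℕ → S → A → ℝ, IsOccupancy H s0 p q →
      lagrangian H c d l (qt t) (lam t) ≤ lagrangian H c d l q (lam t) + εbr)
    (hnr : ∀ μ : ℝ × ℝ, 0 ≤ μ.1 → 0 ≤ μ.2 → μ.1 + μ.2 = B →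
      (∑ t ∈ Finset.range T, lagrangian H c d l (qhat t) μ) -
        (∑ t ∈ Finset.range T, lagrangian H c d l (qhat t) (lam t)) ≤ R)
    (qtil : ℕ → S → A → ℝ)
    (hqtil : qtil = fun h s a => (∑ t ∈ Finset.range T, qhat t h s a) / T)
    (εest εol : ℝ) (hεest : εest = (Cbar + B * Dbar) * εoe)
    (hεol : εol = 2 * εbr + 2 * εest + R / T)
    (qf : ℕ → S → A → ℝ) (hqf : IsOccupancy H s0 p qf) (hqffeas : costVal H d qf ≤ l) :
    costVal H d qtil ≤ l + 2 * (Cbar * ((H : ℝ) + 1) + εol + εest) / B := by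
  obtain ⟨a⟩ := ‹Nonempty A›
  have hCbar : 0 ≤ Cbar := (hc 0 H.zero_le s0 a).1.trans (hc 0 H.zero_le s0 a).2
  have hDbar : 0 ≤ Dbar := (hd 0 H.zero_le s0 a).1.trans (hd 0 H.zero_le s0 a).2
  have hεest₀ : 0 ≤ εest := hεest ▸ by positivity
  have hround : ∀ t ∈ range T, B * (costVal H d (qhat t) - l) ≤
      (lagrangian H c d l (qhat t) (B, 0) - lagrangian H c d l (qhat t) (lam t)) +
        (Cbar * (H + 1) + εbr + 2 * εest) := by
    intro t ht
    replace ht := mem_range.mp ht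
    obtain ⟨hl₁, hl₂, hlB⟩ := hlam t ht
    have := (hqt t ht).lagrangian_sub_costVal_le (fun h hh s a => (hp h hh s a).2) hc hd hCbar
      hDbar hl₁ (B := B) (by linarith) (hqhat t ht) hqf hqffeas (hbr t ht qf hqf)
    simp only [lagrangian, hεest] at this ⊢
    linarith
  have hviol : B * (costVal H d qtil - l) ≤ Cbar * (H + 1) + εbr + 2 * εest + R / T := by
    rw [show B * (costVal H d qtil - l) = (∑ t ∈ range T, B * (costVal H d (qhat t) - l)) / T by
      rw [hqtil, costVal_avg, ← mul_sum, sum_sub_distrib, sum_const, card_range, nsmul_eq_mul]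
      field_simp]
    refine sum_div_le_add_div hT hround ?_
    rw [sum_sub_distrib]
    exact hnr (B, 0) hB.le le_rfl (add_zero B)
  have hM : 0 ≤ Cbar * ((H : ℝ) + 1) := by positivity
  have hRT : 0 ≤ R / T := by positivity
  rw [← sub_le_iff_le_add', le_div_iff₀ hB, hεol, mul_comm]
  linarith

theorem stmt2 {S A : Type*} [Fintype S] [Fintype A] [DecidableEq S] [Nonempty S] [Nonempty A]
    (H : ℕ) (s0 : S) (p : ℕ → S → A → S → ℝ)
    (hp : ∀ h < H, ∀ (s : S) (a : A), (∀ s' : S, 0 ≤ p h s a s') ∧ ∑ s' : S, p h s a s' = 1)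
    (c d : ℕ → S → A → ℝ) (Cbar Dbar : ℝ)
    (hc : ∀ h ≤ H, ∀ (s : S) (a : A), 0 ≤ c h s a ∧ c h s a ≤ Cbar)
    (hd : ∀ h ≤ H, ∀ (s : S) (a : A), 0 ≤ d h s a ∧ d h s a ≤ Dbar)
    (l B : ℝ) (hB : 0 < B) (T : ℕ) (hT : 1 ≤ T)
    (εbr εoe R : ℝ) (hεbr : 0 ≤ εbr) (hεoe : 0 ≤ εoe) (hR : 0 ≤ R)
    (qt qhat : ℕ → ℕ → S → A → ℝ) (lam : ℕ → ℝ × ℝ)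
    (hqt : ∀ t < T, IsOccupancy H s0 p (qt t))
    (hqhat : ∀ t < T, l1norm H (fun h s a => qt t h s a - qhat t h s a) ≤ εoe)
    (hlam : ∀ t < T, 0 ≤ (lam t).1 ∧ 0 ≤ (lam t).2 ∧ (lam t).1 + (lam t).2 = B)
    (hbr : ∀ t < T, ∀ q : ℕ → S → A → ℝ, IsOccupancy H s0 p q →
      lagrangian H c d l (qt t) (lam t) ≤ lagrangian H c d l q (lam t) + εbr)
    (hnr : ∀ μ : ℝ × ℝ, 0 ≤ μ.1 → 0 ≤ μ.2 → μ.1 + μ.2 = B →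
      (∑ t ∈ Finset.range T, lagrangian H c d l (qhat t) μ) -
        (∑ t ∈ Finset.range T, lagrangian H c d l (qhat t) (lam t)) ≤ R)
    (qtil : ℕ → S → A → ℝ)
    (hqtil : qtil = fun h s a => (∑ t ∈ Finset.range T, qhat t h s a) / T)
    (εest εol : ℝ) (hεest : εest = (Cbar + B * Dbar) * εoe)
    (hεol : εol = 2 * εbr + 2 * εest + R / T)
    (qf : ℕ → S → A → ℝ) (hqf : IsOccupancy H s0 p qf) (hqffeas : costVal H d qf ≤ l) :
    costVal H d qtil ≤ l + 2 * (Cbar * ((H : ℝ) + 1) + εol + εest) / B :=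
  stmt2_general H s0 p hp c d Cbar Dbar hc hd l B hB T hT εbr εoe R hεbr hεoe hR qt qhat lam hqt
    hqhat hlam hbr hnr qtil hqtil εest εol hεest hεol qf hqf hqffeas
end

section
/- Let π be a policy with occupancy measure q̄ = q^π, and let q̃ : {0,…,H} × S × A → ℝ satisfy q̃_h(s,a) ≥ 0 for all h,s,a, Σ_{b∈A} q̃_h(s,b) > 0 for all h,s, and ‖q̄ − q̃‖₁ ≤ ε_oe. Define the policy π̃ by π̃_h(a|s) = q̃_h(s,a) / Σ_{b∈A} q̃_h(s,b). Then the occupancy measure of π̃ satisfies ‖q^{π̃} − q̄‖₁ ≤ 2(H+1)·ε_oe. -/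
/-- A policy: `π h s a` is the probability of action `a` at state `s`, step `h`. -/
def IsPolicy {S A : Type*} [Fintype A] (H : ℕ) (π : ℕ → S → A → ℝ) : Prop :=
  ∀ h ≤ H, ∀ s : S, (∀ a : A, 0 ≤ π h s a) ∧ ∑ a : A, π h s a = 1

/-- The occupancy measure q^π of a policy π, defined recursively:
q^π_0(s,a) = π_0(a|s) if s = s0, else 0;
q^π_{h+1}(s,a) = π_{h+1}(a|s) · Σ_{s',a'} p_h(s|s',a') q^π_h(s',a'). -/
def occMeasure {S A : Type*} [Fintype S] [Fintype A] [DecidableEq S] (s0 : S)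
    (p : ℕ → S → A → S → ℝ) (π : ℕ → S → A → ℝ) : ℕ → S → A → ℝ
  | 0 => fun s a => if s = s0 then π 0 s a else 0
  | (h + 1) => fun s a =>
      π (h + 1) s a * ∑ s' : S, ∑ a' : A, p h s' a' s * occMeasure s0 p π h s' a'


/-!
Write `q = q^π` and `q' = q^{π̃}`. Since `π̃` rows sum to one, `q'_h(s, ·) = π̃_h(·|s) d'_h(s)` with
`d'_h(s) = Σ_a q'_h(s,a)` the state marginal, and `π̃_h(·|s)` is `q̃_h(s, ·)` normalised. Comparing
with `q_h(s, ·)` gives `‖q'_h - q_h‖₁ ≤ ‖d'_h - d_h‖₁ + 2 ‖q_h - q̃_h‖₁`. The marginals agree at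
`h = 0`, and one step of the stochastic transition kernel does not increase the ℓ¹ distance, so
`‖d'_{h+1} - d_{h+1}‖₁ ≤ ‖q'_h - q_h‖₁`. Hence `‖q'_h - q_h‖₁ ≤ 2 Σ_{k ≤ h} ‖q_k - q̃_k‖₁ ≤ 2 ε_oe`
for every `h ≤ H`, and summing over the `H + 1` steps gives the bound.
-/

open Finset

lemma le_sum_range_of_le_add {e c : ℕ → ℝ} {N : ℕ} (h0 : e 0 ≤ c 0)
    (hsucc : ∀ n < N, e (n + 1) ≤ e n + c (n + 1)) :
    ∀ n ≤ N, e n ≤ ∑ k ∈ range (n + 1), c k := by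
  intro n
  induction n with
  | zero => simpa using h0
  | succ n ih =>
    intro hn
    rw [sum_range_succ]
    linarith [hsucc n hn, ih (by omega)]

lemma sum_abs_div_sum_mul_sub_le {A : Type*} [Fintype A] (u v : A → ℝ) (hu : ∀ a, 0 ≤ u a)
    (hU : 0 < ∑ a, u a) (x : ℝ) :
    ∑ a, |u a / (∑ b, u b) * x - v a| ≤ |x - ∑ a, v a| + 2 * ∑ a, |v a - u a| := by
  set U := ∑ b, u b
  set V := ∑ a, v a
  have hUV : |V - U| ≤ ∑ a, |v a - u a| := by
    rw [← sum_sub_distrib]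
    exact abs_sum_le_sum_abs _ _
  have hterm : ∀ a, |u a / U * x - v a| ≤
      u a / U * |x - V| + u a / U * |V - U| + |v a - u a| := by
    intro a
    have hw : 0 ≤ u a / U := div_nonneg (hu a) hU.le
    calc |u a / U * x - v a| = |u a / U * (x - V) + u a / U * (V - U) + (u a - v a)| := by
          congr 1
          field_simp
          ring
      _ ≤ |u a / U * (x - V)| + |u a / U * (V - U)| + |u a - v a| := abs_add_three _ _ _
      _ = _ := by rw [abs_mul, abs_mul, abs_of_nonneg hw, abs_sub_comm (u a)]
  have hw1 : ∑ a, u a / U = 1 := by rw [← sum_div, div_self hU.ne']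
  calc ∑ a, |u a / U * x - v a|
      ≤ ∑ a, (u a / U * |x - V| + u a / U * |V - U| + |v a - u a|) :=
        sum_le_sum fun a _ => hterm a
    _ = |x - V| + |V - U| + ∑ a, |v a - u a| := by
        rw [sum_add_distrib, sum_add_distrib, ← sum_mul, ← sum_mul, hw1, one_mul, one_mul]
    _ ≤ |x - V| + 2 * ∑ a, |v a - u a| := by linarith

lemma sum_abs_sum_sum_mul_le {S A : Type*} [Fintype S] [Fintype A] (P : S → A → S → ℝ)
    (hP : ∀ s a, (∀ s', 0 ≤ P s a s') ∧ ∑ s', P s a s' = 1) (f : S → A → ℝ) :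
    ∑ s, |∑ s', ∑ a', P s' a' s * f s' a'| ≤ ∑ s', ∑ a', |f s' a'| :=
  calc ∑ s, |∑ s', ∑ a', P s' a' s * f s' a'|
      ≤ ∑ s, ∑ s', ∑ a', |P s' a' s * f s' a'| :=
        sum_le_sum fun s _ => (abs_sum_le_sum_abs _ _).trans
          (sum_le_sum fun s' _ => abs_sum_le_sum_abs _ _)
    _ = ∑ s', ∑ a', (∑ s, P s' a' s) * |f s' a'| := by
        rw [sum_comm]
        refine sum_congr rfl fun s' _ => ?_
        rw [sum_comm]
        refine sum_congr rfl fun a' _ => ?_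
        rw [sum_mul]
        exact sum_congr rfl fun s _ => by rw [abs_mul, abs_of_nonneg ((hP s' a').1 s)]
    _ = ∑ s', ∑ a', |f s' a'| := by simp only [(hP _ _).2, one_mul]

section Occupancy

variable {S A : Type*} [Fintype S] [Fintype A] [DecidableEq S] (s0 : S)
  (p : ℕ → S → A → S → ℝ)

lemma sum_occMeasure_zero {π : ℕ → S → A → ℝ} (hπ : ∑ a, π 0 s0 a = 1) (s : S) :
    ∑ a, occMeasure s0 p π 0 s a = if s = s0 then 1 else 0 := by
  by_cases hs : s = s0 <;> simp [occMeasure, hs, hπ]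

lemma sum_occMeasure_succ {π : ℕ → S → A → ℝ} {h : ℕ} (hπ : ∀ s, ∑ a, π (h + 1) s a = 1)
    (s : S) :
    ∑ a, occMeasure s0 p π (h + 1) s a =
      ∑ s', ∑ a', p h s' a' s * occMeasure s0 p π h s' a' := by
  simp only [occMeasure]
  rw [← sum_mul, hπ s, one_mul]

lemma occMeasure_eq_mul_sum {π : ℕ → S → A → ℝ} {h : ℕ} (hπ : ∀ s, ∑ a, π h s a = 1)
    (s : S) (a : A) :
    occMeasure s0 p π h s a = π h s a * ∑ b, occMeasure s0 p π h s b := by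
  cases h with
  | zero => by_cases hs : s = s0 <;> simp [occMeasure, hs, hπ s0]
  | succ h => rw [sum_occMeasure_succ s0 p hπ]; rfl

lemma sum_abs_sum_occMeasure_succ_sub_le {π₁ π₂ : ℕ → S → A → ℝ} {h : ℕ}
    (hp : ∀ s a, (∀ s', 0 ≤ p h s a s') ∧ ∑ s', p h s a s' = 1)
    (hπ₁ : ∀ s, ∑ a, π₁ (h + 1) s a = 1) (hπ₂ : ∀ s, ∑ a, π₂ (h + 1) s a = 1) :
    ∑ s, |∑ a, occMeasure s0 p π₁ (h + 1) s a - ∑ a, occMeasure s0 p π₂ (h + 1) s a| ≤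
      ∑ s, ∑ a, |occMeasure s0 p π₁ h s a - occMeasure s0 p π₂ h s a| := by
  simp_rw [sum_occMeasure_succ s0 p hπ₁, sum_occMeasure_succ s0 p hπ₂, ← sum_sub_distrib,
    ← mul_sub]
  exact sum_abs_sum_sum_mul_le (p h) hp _

lemma sum_abs_occMeasure_normalize_sub_le (u : ℕ → S → A → ℝ) {h : ℕ}
    (hu : ∀ s a, 0 ≤ u h s a) (hU : ∀ s, 0 < ∑ b, u h s b) (q : S → A → ℝ) :
    ∑ s, ∑ a, |occMeasure s0 p (fun h s a => u h s a / ∑ b, u h s b) h s a - q s a| ≤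
      ∑ s, |∑ a, occMeasure s0 p (fun h s a => u h s a / ∑ b, u h s b) h s a - ∑ a, q s a| +
        2 * ∑ s, ∑ a, |q s a - u h s a| := by
  have hrow : ∀ s, ∑ a, u h s a / ∑ b, u h s b = 1 := fun s => by
    rw [← sum_div, div_self (hU s).ne']
  have hrep := occMeasure_eq_mul_sum s0 p (π := fun h s a => u h s a / ∑ b, u h s b) hrow
  set q' := occMeasure s0 p (fun h s a => u h s a / ∑ b, u h s b)
  rw [mul_sum, ← sum_add_distrib]
  refine sum_le_sum fun s _ => ?_
  calc ∑ a, |q' h s a - q s a|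
      = ∑ a, |u h s a / (∑ b, u h s b) * ∑ b, q' h s b - q s a| :=
        sum_congr rfl fun a _ => by rw [hrep s a]
    _ ≤ _ := sum_abs_div_sum_mul_sub_le _ _ (hu s) (hU s) _

end Occupancy

theorem stmt6_general {S A : Type*} [Fintype S] [Fintype A] [DecidableEq S]
    (H : ℕ) (s0 : S) (p : ℕ → S → A → S → ℝ)
    (hp : ∀ h < H, ∀ (s : S) (a : A), (∀ s' : S, 0 ≤ p h s a s') ∧ ∑ s' : S, p h s a s' = 1)
    (π : ℕ → S → A → ℝ) (hπ : IsPolicy H π)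
    (εoe : ℝ)
    (qtil : ℕ → S → A → ℝ)
    (hpos : ∀ h ≤ H, ∀ (s : S) (a : A), 0 ≤ qtil h s a)
    (hsum : ∀ h ≤ H, ∀ s : S, 0 < ∑ b : A, qtil h s b)
    (hclose : l1norm H (fun h s a => occMeasure s0 p π h s a - qtil h s a) ≤ εoe) :
    l1norm H (fun h s a =>
        occMeasure s0 p (fun h s a => qtil h s a / ∑ b : A, qtil h s b) h s a -
          occMeasure s0 p π h s a) ≤ 2 * ((H : ℝ) + 1) * εoe := by
  set π' : ℕ → S → A → ℝ := fun h s a => qtil h s a / ∑ b : A, qtil h s b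
  have hπ' : ∀ h ≤ H, ∀ s, ∑ a, π' h s a = 1 := fun h hh s => by
    simp only [π', ← sum_div, div_self (hsum h hh s).ne']
  set e : ℕ → ℝ := fun h => ∑ s, ∑ a, |occMeasure s0 p π' h s a - occMeasure s0 p π h s a|
  set ε : ℕ → ℝ := fun h => ∑ s, ∑ a, |occMeasure s0 p π h s a - qtil h s a|
  have hstep : ∀ h ≤ H, e h ≤ ∑ s, |∑ a, occMeasure s0 p π' h s a -
      ∑ a, occMeasure s0 p π h s a| + 2 * ε h := fun h hh =>
    sum_abs_occMeasure_normalize_sub_le s0 p qtil (hpos h hh) (hsum h hh) _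
  have he : ∀ h ≤ H, e h ≤ ∑ k ∈ range (h + 1), 2 * ε k := by
    refine le_sum_range_of_le_add ?_ fun h hh => ?_
    · simpa [sum_occMeasure_zero s0 p (hπ' 0 H.zero_le s0),
        sum_occMeasure_zero s0 p (hπ 0 H.zero_le s0).2] using hstep 0 H.zero_le
    · linarith [hstep (h + 1) hh, sum_abs_sum_occMeasure_succ_sub_le s0 p (hp h hh)
        (hπ' (h + 1) hh) fun s => (hπ (h + 1) hh s).2]
  have hε : ∀ h ≤ H, ∑ k ∈ range (h + 1), 2 * ε k ≤ 2 * εoe := fun h hh => by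
    rw [← mul_sum]
    gcongr
    refine (sum_le_sum_of_subset_of_nonneg (range_subset_range.2 (by omega)) ?_).trans hclose
    exact fun k _ _ => sum_nonneg fun s _ => sum_nonneg fun a _ => abs_nonneg _
  calc l1norm H _ = ∑ h ∈ range (H + 1), e h := rfl
    _ ≤ ∑ h ∈ range (H + 1), 2 * εoe :=
        sum_le_sum fun h hh =>
          have hhH : h ≤ H := Nat.lt_succ_iff.1 (mem_range.1 hh)
          (he h hhH).trans (hε h hhH)
    _ = 2 * ((H : ℝ) + 1) * εoe := by
        rw [sum_const, card_range, nsmul_eq_mul]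
        push_cast
        ring

theorem stmt6 {S A : Type*} [Fintype S] [Fintype A] [DecidableEq S] [Nonempty S] [Nonempty A]
    (H : ℕ) (s0 : S) (p : ℕ → S → A → S → ℝ)
    (hp : ∀ h < H, ∀ (s : S) (a : A), (∀ s' : S, 0 ≤ p h s a s') ∧ ∑ s' : S, p h s a s' = 1)
    (π : ℕ → S → A → ℝ) (hπ : IsPolicy H π)
    (εoe : ℝ) (hεoe : 0 ≤ εoe)
    (qtil : ℕ → S → A → ℝ)
    (hpos : ∀ h ≤ H, ∀ (s : S) (a : A), 0 ≤ qtil h s a)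
    (hsum : ∀ h ≤ H, ∀ s : S, 0 < ∑ b : A, qtil h s b)
    (hclose : l1norm H (fun h s a => occMeasure s0 p π h s a - qtil h s a) ≤ εoe) :
    l1norm H (fun h s a =>
        occMeasure s0 p (fun h s a => qtil h s a / ∑ b : A, qtil h s b) h s a -
          occMeasure s0 p π h s a) ≤ 2 * ((H : ℝ) + 1) * εoe :=
  stmt6_general H s0 p hp π hπ εoe qtil hpos hsum hclose
end

section
/- Let π be a policy with occupancy measure q̄ = q^π, and let q̃ : {0,…,H} × S × A → ℝ satisfy q̃_h(s,a) ≥ 0 for all h,s,a, Σ_{b∈A} q̃_h(s,b) > 0 for all h,s, and ‖q̄ − q̃‖₁ ≤ ε_oe. Define the policy π̃ by π̃_h(a|s) = q̃_h(s,a) / Σ_{b∈A} q̃_h(s,b). Then the occupancy measure of π̃ satisfies ‖q^{π̃} − q̃‖₁ ≤ (2H+3)·ε_oe. -/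
theorem stmt7 {S A : Type*} [Fintype S] [Fintype A] [DecidableEq S] [Nonempty S] [Nonempty A]
    (H : ℕ) (s0 : S) (p : ℕ → S → A → S → ℝ)
    (hp : ∀ h < H, ∀ (s : S) (a : A), (∀ s' : S, 0 ≤ p h s a s') ∧ ∑ s' : S, p h s a s' = 1)
    (π : ℕ → S → A → ℝ) (hπ : IsPolicy H π)
    (εoe : ℝ) (hεoe : 0 ≤ εoe)
    (qtil : ℕ → S → A → ℝ)
    (hpos : ∀ h ≤ H, ∀ (s : S) (a : A), 0 ≤ qtil h s a)
    (hsum : ∀ h ≤ H, ∀ s : S, 0 < ∑ b : A, qtil h s b)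
    (hclose : l1norm H (fun h s a => occMeasure s0 p π h s a - qtil h s a) ≤ εoe) :
    l1norm H (fun h s a =>
        occMeasure s0 p (fun h s a => qtil h s a / ∑ b : A, qtil h s b) h s a -
          qtil h s a) ≤ (2 * (H : ℝ) + 3) * εoe := by
  classical
  set πt : ℕ → S → A → ℝ := fun h s a => qtil h s a / ∑ b : A, qtil h s b with hπtdef
  set qh : ℕ → S → A → ℝ := occMeasure s0 p πt with hqhdef
  set qb : ℕ → S → A → ℝ := occMeasure s0 p π with hqbdef
  set δ : ℕ → ℝ := fun k => ∑ s : S, ∑ a : A, |qb k s a - qtil k s a| with hδdef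
  set e : ℕ → ℝ := fun k => ∑ s : S, ∑ a : A, |qh k s a - qtil k s a| with hedef
  have hδnn : ∀ k, 0 ≤ δ k := by
    intro k
    simp only [hδdef]
    positivity
  have hclose' : ∑ k ∈ Finset.range (H + 1), δ k ≤ εoe := hclose
  have hD : ∀ h ≤ H, ∑ k ∈ Finset.range (h + 1), δ k ≤ εoe := by
    intro h hh
    refine le_trans (Finset.sum_le_sum_of_subset_of_nonneg ?_ ?_) hclose'
    · exact Finset.range_subset_range.mpr (by omega)
    · intro i _ _; exact hδnn i
  have hπt_nn : ∀ h ≤ H, ∀ s a, 0 ≤ πt h s a := fun h hh s a =>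
    div_nonneg (hpos h hh s a) (hsum h hh s).le
  have hπt_sum : ∀ h ≤ H, ∀ s, ∑ a : A, πt h s a = 1 := by
    intro h hh s
    simp only [hπtdef]
    rw [← Finset.sum_div, div_self (hsum h hh s).ne']
  have habs : ∀ h ≤ H, ∀ s : S, ∀ x : ℝ,
      (∑ a : A, |πt h s a * x - qtil h s a|) = |x - ∑ b : A, qtil h s b| := by
    intro h hh s x
    have hy : (∑ b : A, qtil h s b) ≠ 0 := (hsum h hh s).ne'
    have h1 : ∀ a : A, πt h s a * x - qtil h s a = πt h s a * (x - ∑ b : A, qtil h s b) := by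
      intro a
      simp only [hπtdef]
      field_simp
    calc ∑ a : A, |πt h s a * x - qtil h s a|
        = ∑ a : A, πt h s a * |x - ∑ b : A, qtil h s b| := by
          refine Finset.sum_congr rfl fun a _ => ?_
          rw [h1 a, abs_mul, abs_of_nonneg (hπt_nn h hh s a)]
      _ = |x - ∑ b : A, qtil h s b| := by
          rw [← Finset.sum_mul, hπt_sum h hh s, one_mul]
  have he0 : e 0 = ∑ s : S, |(if s = s0 then (1 : ℝ) else 0) - ∑ b : A, qtil 0 s b| := by
    simp only [hedef]
    refine Finset.sum_congr rfl fun s _ => ?_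
    have hq : ∀ a : A, qh 0 s a = πt 0 s a * (if s = s0 then (1 : ℝ) else 0) := by
      intro a
      simp only [hqhdef, occMeasure]
      split <;> simp
    simp_rw [hq]
    exact habs 0 (Nat.zero_le H) s _
  have heS : ∀ h, h + 1 ≤ H → e (h + 1) = ∑ s : S,
      |(∑ s' : S, ∑ a' : A, p h s' a' s * qh h s' a') - ∑ b : A, qtil (h + 1) s b| := by
    intro h hh
    simp only [hedef]
    refine Finset.sum_congr rfl fun s _ => ?_
    have hq : ∀ a : A, qh (h + 1) s a
        = πt (h + 1) s a * ∑ s' : S, ∑ a' : A, p h s' a' s * qh h s' a' := by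
      intro a
      simp only [hqhdef, occMeasure]
    simp_rw [hq]
    exact habs (h + 1) hh s _
  have hqb0 : ∀ s : S, ∑ a : A, qb 0 s a = (if s = s0 then (1 : ℝ) else 0) := by
    intro s
    have hq : ∀ a : A, qb 0 s a = if s = s0 then π 0 s a else 0 := by
      intro a; simp only [hqbdef, occMeasure]
    simp_rw [hq]
    by_cases hs : s = s0 <;> simp [hs, (hπ 0 (Nat.zero_le H) s0).2]
  have hqbS : ∀ h, h + 1 ≤ H → ∀ s : S,
      ∑ a : A, qb (h + 1) s a = ∑ s' : S, ∑ a' : A, p h s' a' s * qb h s' a' := by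
    intro h hh s
    have hq : ∀ a : A, qb (h + 1) s a
        = π (h + 1) s a * ∑ s' : S, ∑ a' : A, p h s' a' s * qb h s' a' := by
      intro a; simp only [hqbdef, occMeasure]
    simp_rw [hq]
    rw [← Finset.sum_mul, (hπ (h + 1) hh s).2, one_mul]
  have base : e 0 ≤ δ 0 := by
    rw [he0]
    simp only [hδdef]
    refine Finset.sum_le_sum fun s _ => ?_
    rw [← hqb0 s, ← Finset.sum_sub_distrib]
    exact Finset.abs_sum_le_sum_abs _ _
  have step : ∀ h, h + 1 ≤ H → e (h + 1) ≤ e h + δ h + δ (h + 1) := by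
    intro h hh
    have hpnn : ∀ s' a' s, 0 ≤ p h s' a' s := fun s' a' s => (hp h (by omega) s' a').1 s
    have hpsum : ∀ s' a', ∑ s : S, p h s' a' s = 1 := fun s' a' => (hp h (by omega) s' a').2
    have hPQ : ∀ (u v : ℕ → S → A → ℝ) (s : S),
        |(∑ s' : S, ∑ a' : A, p h s' a' s * u h s' a') -
          (∑ s' : S, ∑ a' : A, p h s' a' s * v h s' a')| ≤
          ∑ s' : S, ∑ a' : A, p h s' a' s * |u h s' a' - v h s' a'| := by
      intro u v s
      rw [← Finset.sum_sub_distrib]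
      simp_rw [← Finset.sum_sub_distrib, ← mul_sub]
      refine le_trans (Finset.abs_sum_le_sum_abs _ _) (Finset.sum_le_sum fun s' _ => ?_)
      refine le_trans (Finset.abs_sum_le_sum_abs _ _) (Finset.sum_le_sum fun a' _ => ?_)
      rw [abs_mul, abs_of_nonneg (hpnn s' a' s)]
    have hterm : ∀ s : S,
        |(∑ s' : S, ∑ a' : A, p h s' a' s * qh h s' a') - ∑ b : A, qtil (h + 1) s b| ≤
          (∑ s' : S, ∑ a' : A, p h s' a' s * |qh h s' a' - qtil h s' a'|)
          + (∑ s' : S, ∑ a' : A, p h s' a' s * |qb h s' a' - qtil h s' a'|)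
          + ∑ a : A, |qb (h + 1) s a - qtil (h + 1) s a| := by
      intro s
      have t1 := abs_sub_le (∑ s' : S, ∑ a' : A, p h s' a' s * qh h s' a')
        (∑ s' : S, ∑ a' : A, p h s' a' s * qb h s' a') (∑ b : A, qtil (h + 1) s b)
      have t2 : |(∑ s' : S, ∑ a' : A, p h s' a' s * qh h s' a') -
          (∑ s' : S, ∑ a' : A, p h s' a' s * qb h s' a')| ≤
          (∑ s' : S, ∑ a' : A, p h s' a' s * |qh h s' a' - qtil h s' a'|)
          + (∑ s' : S, ∑ a' : A, p h s' a' s * |qb h s' a' - qtil h s' a'|) := by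
        have t3 := abs_sub_le (∑ s' : S, ∑ a' : A, p h s' a' s * qh h s' a')
          (∑ s' : S, ∑ a' : A, p h s' a' s * qtil h s' a')
          (∑ s' : S, ∑ a' : A, p h s' a' s * qb h s' a')
        have t4 := hPQ qh qtil s
        have t5 := hPQ qtil qb s
        have t6 : ∀ s' a', |qtil h s' a' - qb h s' a'| = |qb h s' a' - qtil h s' a'| :=
          fun s' a' => abs_sub_comm _ _
        simp_rw [t6] at t5
        linarith
      have t7 : |(∑ s' : S, ∑ a' : A, p h s' a' s * qb h s' a') -
          ∑ b : A, qtil (h + 1) s b| ≤ ∑ a : A, |qb (h + 1) s a - qtil (h + 1) s a| := by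
        rw [← hqbS h hh s, ← Finset.sum_sub_distrib]
        exact Finset.abs_sum_le_sum_abs _ _
      linarith
    have hswap : ∀ c : S → A → ℝ,
        (∑ s : S, ∑ s' : S, ∑ a' : A, p h s' a' s * c s' a') = ∑ s' : S, ∑ a' : A, c s' a' := by
      intro c
      rw [Finset.sum_comm]
      refine Finset.sum_congr rfl fun s' _ => ?_
      rw [Finset.sum_comm]
      refine Finset.sum_congr rfl fun a' _ => ?_
      rw [← Finset.sum_mul, hpsum s' a', one_mul]
    calc e (h + 1) = ∑ s : S,
        |(∑ s' : S, ∑ a' : A, p h s' a' s * qh h s' a') - ∑ b : A, qtil (h + 1) s b| :=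
          heS h hh
      _ ≤ ∑ s : S, ((∑ s' : S, ∑ a' : A, p h s' a' s * |qh h s' a' - qtil h s' a'|)
          + (∑ s' : S, ∑ a' : A, p h s' a' s * |qb h s' a' - qtil h s' a'|)
          + ∑ a : A, |qb (h + 1) s a - qtil (h + 1) s a|) :=
          Finset.sum_le_sum fun s _ => hterm s
      _ = e h + δ h + δ (h + 1) := by
          rw [Finset.sum_add_distrib, Finset.sum_add_distrib,
            hswap (fun s' a' => |qh h s' a' - qtil h s' a'|),
            hswap (fun s' a' => |qb h s' a' - qtil h s' a'|)]
  have main : ∀ h ≤ H, e h + δ h ≤ 2 * ∑ k ∈ Finset.range (h + 1), δ k := by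
    intro h
    induction h with
    | zero =>
      intro _
      rw [Finset.sum_range_one]
      linarith [base]
    | succ n ih =>
      intro hh
      have h1 := ih (by omega)
      have h2 := step n hh
      rw [Finset.sum_range_succ]
      linarith
  have ebound : ∀ h ≤ H, e h ≤ 2 * εoe := by
    intro h hh
    have h1 := main h hh
    have h2 := hD h hh
    have h3 := hδnn h
    linarith
  show ∑ h ∈ Finset.range (H + 1), e h ≤ (2 * (H : ℝ) + 3) * εoe
  calc ∑ h ∈ Finset.range (H + 1), e h ≤ ∑ _h ∈ Finset.range (H + 1), 2 * εoe :=
        Finset.sum_le_sum fun h hh => ebound h (by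
          have := Finset.mem_range.mp hh; omega)
    _ = ((H : ℝ) + 1) * (2 * εoe) := by
        rw [Finset.sum_const, Finset.card_range]
        ring
    _ ≤ (2 * (H : ℝ) + 3) * εoe := by nlinarith [Nat.cast_nonneg (α := ℝ) H]
end

section
/- Let q ∈ Δ be an occupancy measure such that Σ_{b∈A} q_h(s,b) > 0 for every h ∈ {0,…,H} and s ∈ S. Define the policy π by π_h(a|s) = q_h(s,a) / Σ_{b∈A} q_h(s,b). Then the occupancy measure generated by π equals q, i.e., q^π_h(s,a) = q_h(s,a) for all h, s, a. -/
theorem stmt12 {S A : Type*} [Fintype S] [Fintype A] [DecidableEq S] [Nonempty S] [Nonempty A]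
    (H : ℕ) (s0 : S) (p : ℕ → S → A → S → ℝ)
    (hp : ∀ h < H, ∀ (s : S) (a : A), (∀ s' : S, 0 ≤ p h s a s') ∧ ∑ s' : S, p h s a s' = 1)
    (q : ℕ → S → A → ℝ) (hq : IsOccupancy H s0 p q)
    (hsum : ∀ h ≤ H, ∀ s : S, 0 < ∑ b : A, q h s b) :
    ∀ h ≤ H, ∀ (s : S) (a : A),
      occMeasure s0 p (fun h s a => q h s a / ∑ b : A, q h s b) h s a = q h s a := by

  obtain ⟨hpos, h0, hrec⟩ := hq
  intro h
  induction h with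
  | zero =>
    intro _ s a
    simp only [occMeasure]
    by_cases hs : s = s0
    · rw [if_pos hs]
      have := h0 s
      rw [if_pos hs] at this
      rw [this, div_one]
    · rw [if_neg hs]
      have hsz := h0 s
      rw [if_neg hs] at hsz
      have := hsum 0 (Nat.zero_le _) s
      rw [hsz] at this
      linarith
  | succ h ih =>
    intro hle s a
    have hlt : h < H := Nat.lt_of_succ_le hle
    have hle' : h ≤ H := le_of_lt hlt
    simp only [occMeasure]
    have hq' : ∀ s' a', occMeasure s0 p (fun h s a => q h s a / ∑ b : A, q h s b) h s' a'
        = q h s' a' := ih hle'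
    have : (∑ s' : S, ∑ a' : A, p h s' a' s *
        occMeasure s0 p (fun h s a => q h s a / ∑ b : A, q h s b) h s' a')
        = ∑ s' : S, ∑ a' : A, p h s' a' s * q h s' a' := by
      refine Finset.sum_congr rfl fun s' _ => Finset.sum_congr rfl fun a' _ => ?_
      rw [hq']
    rw [this, ← hrec h hlt s, div_mul_cancel₀]
    exact ne_of_gt (hsum (h+1) hle s)
end
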